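/- arXiv:1605.06828 — 3 statements merged into one kernel-verified Lean document; each statement's English description precedes it below -/
import Mathlib

section
/- Let M be a finitely generated abelian group, S an M-graded integral domain with field of fractions 𝔽, and 𝔽⁰ the subfield of fractions f/g with f, g homogeneous of the same degree. If a ∈ S is a nonzero homogeneous element, then the subfield of 𝔽 generated by 𝔽⁰ and a equals the set of fractions f/g where f and g are sums of homogeneous components whose degrees all lie in the same coset of the subgroup ⟨deg a⟩ ⊆ M (with f and g having the same coset degree). -/
/-!
An element of `Fcoarse 𝒜 ⟨d⟩` is `f / g` with `f`, `g` sums of homogeneous pieces of degrees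
`m + k • d`. Dividing by one nonzero homogeneous component `g₀` of `g` reduces to quotients
`x / g₀` of homogeneous elements whose degrees differ by a multiple of `d`; multiplying
numerator and denominator by suitable powers of `a` equalises the degrees, so
`x / g₀ = (x aⁿ¹ / g₀ aⁿ²) · aⁿ² / aⁿ¹` lies in the field generated by `𝔽⁰` and `a`.
Conversely, `Fcoarse 𝒜 ⟨d⟩` is a subfield containing `𝔽⁰` and `a = a / 1`.
-/

variable {M : Type*} [AddCommGroup M] [DecidableEq M]
variable {S : Type*} [CommRing S] [IsDomain S]

/-- The degree-0 subfield (as a set): fractions of homogeneous elements of equal degree. -/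
def F0 (𝒜 : M → AddSubgroup S) : Set (FractionRing S) :=
  {x | ∃ (m : M) (f g : S), f ∈ 𝒜 m ∧ g ∈ 𝒜 m ∧ g ≠ 0 ∧
    x = algebraMap S (FractionRing S) f / algebraMap S (FractionRing S) g}

/-- Elements of `S` that are sums of homogeneous components whose degrees all lie in
the coset `m + M'`. -/
def coarsePiece (𝒜 : M → AddSubgroup S) (M' : AddSubgroup M) (m : M) : AddSubgroup S :=
  ⨆ m' ∈ M', 𝒜 (m + m')

/-- The degree-0 subfield with respect to the coarser grading by `M ⧸ M'` (as a set):
fractions f/g with f, g sums of homogeneous components whose degrees lie in one common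
coset of `M'`. -/
def Fcoarse (𝒜 : M → AddSubgroup S) (M' : AddSubgroup M) : Set (FractionRing S) :=
  {x | ∃ (m : M) (f g : S), f ∈ coarsePiece 𝒜 M' m ∧ g ∈ coarsePiece 𝒜 M' m ∧ g ≠ 0 ∧
    x = algebraMap S (FractionRing S) f / algebraMap S (FractionRing S) g}

local notation "φ" => algebraMap S (FractionRing S)

section CoarsePiece

omit [DecidableEq M] [IsDomain S]

variable (𝒜 : M → AddSubgroup S) (M' : AddSubgroup M)

lemma mem_coarsePiece_of_mem {m m' : M} (hm' : m' ∈ M') {f : S} (hf : f ∈ 𝒜 (m + m')) :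
    f ∈ coarsePiece 𝒜 M' m :=
  (le_iSup₂ (f := fun m' (_ : m' ∈ M') => 𝒜 (m + m')) m' hm') hf

lemma mem_coarsePiece_of_mem_self {m : M} {f : S} (hf : f ∈ 𝒜 m) : f ∈ coarsePiece 𝒜 M' m :=
  mem_coarsePiece_of_mem 𝒜 M' M'.zero_mem (by rwa [add_zero])

@[elab_as_elim]
lemma coarsePiece_induction {m : M} {motive : ∀ f, f ∈ coarsePiece 𝒜 M' m → Prop}
    (zero : motive 0 (zero_mem _))
    (add : ∀ x y hx hy, motive x hx → motive y hy → motive (x + y) (add_mem hx hy))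
    (mem : ∀ m' (hm' : m' ∈ M') x (hx : x ∈ 𝒜 (m + m')),
      motive x (mem_coarsePiece_of_mem 𝒜 M' hm' hx))
    {f : S} (hf : f ∈ coarsePiece 𝒜 M' m) : motive f hf := by
  suffices ∃ hf', motive f hf' from this.elim fun _ h => h
  rw [coarsePiece, iSup_subtype'] at hf
  induction hf using AddSubgroup.iSup_induction' with
  | hp p x hx => exact ⟨_, mem p p.2 x hx⟩
  | h1 => exact ⟨_, zero⟩
  | hadd x y _ _ hx hy => exact hx.elim fun _ hx => hy.elim fun _ hy => ⟨_, add _ _ _ _ hx hy⟩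

variable {𝒜}

lemma coarsePiece_mul [SetLike.GradedMonoid 𝒜] {m₁ m₂ : M} {f g : S}
    (hf : f ∈ coarsePiece 𝒜 M' m₁) (hg : g ∈ coarsePiece 𝒜 M' m₂) :
    f * g ∈ coarsePiece 𝒜 M' (m₁ + m₂) := by
  induction hf using coarsePiece_induction with
  | zero => simp
  | add x y _ _ hx hy => rw [add_mul]; exact add_mem hx hy
  | mem p hp x hx =>
    induction hg using coarsePiece_induction with
    | zero => simp
    | add y z _ _ hy hz => rw [mul_add]; exact add_mem hy hz
    | mem q hq y hy =>
      refine mem_coarsePiece_of_mem 𝒜 M' (add_mem hp hq) ?_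
      convert SetLike.mul_mem_graded hx hy using 2
      abel

lemma one_mem_coarsePiece [SetLike.GradedMonoid 𝒜] : (1 : S) ∈ coarsePiece 𝒜 M' 0 :=
  mem_coarsePiece_of_mem_self 𝒜 M' SetLike.GradedOne.one_mem

end CoarsePiece

section Decompose

omit [IsDomain S]

variable {𝒜 : M → AddSubgroup S} (M' : AddSubgroup M)

lemma decompose_eq_zero_of_mem_coarsePiece [GradedRing 𝒜] {m : M} {f : S}
    (hf : f ∈ coarsePiece 𝒜 M' m) {i : M} (hi : ∀ m' ∈ M', i ≠ m + m') :
    (DirectSum.decompose 𝒜 f i : S) = 0 := by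
  induction hf using coarsePiece_induction with
  | zero => simp
  | add x y _ _ hx hy => simp [DirectSum.decompose_add, hx, hy]
  | mem m' hm' x hx => exact DirectSum.decompose_of_mem_ne 𝒜 hx fun h => hi m' hm' h.symm

lemma exists_ne_zero_mem_of_mem_coarsePiece [GradedRing 𝒜] {m : M} {g : S}
    (hg : g ∈ coarsePiece 𝒜 M' m) (hg0 : g ≠ 0) :
    ∃ m' ∈ M', ∃ g₀ ∈ 𝒜 (m + m'), g₀ ≠ 0 := by
  have hdec : DirectSum.decompose 𝒜 g ≠ 0 := by
    rwa [Ne, ← DirectSum.decompose_zero, (DirectSum.decompose 𝒜).injective.eq_iff]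
  obtain ⟨i, hi⟩ := DFunLike.ne_iff.mp hdec
  have hi' : (DirectSum.decompose 𝒜 g i : S) ≠ 0 := by
    rwa [DirectSum.zero_apply, Ne, ← ZeroMemClass.coe_eq_zero] at hi
  by_contra! h
  refine hi' (decompose_eq_zero_of_mem_coarsePiece M' hg fun m' hm' him => ?_)
  exact hi' (h m' hm' _ (him ▸ SetLike.coe_mem _))

end Decompose

section Subfield

omit [DecidableEq M]

variable {𝒜 : M → AddSubgroup S}

omit [IsDomain S] in
lemma algebraMap_ne_zero {g : S} (hg : g ≠ 0) : φ g ≠ 0 :=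
  (map_ne_zero_iff _ (IsFractionRing.injective S (FractionRing S))).mpr hg

variable (𝒜) in
def coarseSubfield [SetLike.GradedMonoid 𝒜] (M' : AddSubgroup M) :
    Subfield (FractionRing S) where
  carrier := Fcoarse 𝒜 M'
  one_mem' := ⟨0, 1, 1, one_mem_coarsePiece M', one_mem_coarsePiece M', one_ne_zero, by simp⟩
  zero_mem' := ⟨0, 0, 1, zero_mem _, one_mem_coarsePiece M', one_ne_zero, by simp⟩
  mul_mem' := by
    rintro _ _ ⟨m, f, g, hf, hg, hg0, rfl⟩ ⟨m', f', g', hf', hg', hg0', rfl⟩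
    exact ⟨m + m', f * f', g * g', coarsePiece_mul M' hf hf', coarsePiece_mul M' hg hg',
      mul_ne_zero hg0 hg0', by rw [map_mul, map_mul, div_mul_div_comm]⟩
  add_mem' := by
    rintro _ _ ⟨m, f, g, hf, hg, hg0, rfl⟩ ⟨m', f', g', hf', hg', hg0', rfl⟩
    refine ⟨m + m', f * g' + g * f', g * g',
      add_mem (coarsePiece_mul M' hf hg') (coarsePiece_mul M' hg hf'),
      coarsePiece_mul M' hg hg', mul_ne_zero hg0 hg0', ?_⟩
    rw [div_add_div _ _ (algebraMap_ne_zero hg0) (algebraMap_ne_zero hg0')]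
    simp only [map_add, map_mul]
  neg_mem' := by
    rintro _ ⟨m, f, g, hf, hg, hg0, rfl⟩
    exact ⟨m, -f, g, neg_mem hf, hg, hg0, by rw [map_neg, neg_div]⟩
  inv_mem' := by
    rintro _ ⟨m, f, g, hf, hg, hg0, rfl⟩
    by_cases hf0 : f = 0
    · exact ⟨m, 0, g, zero_mem _, hg, hg0, by simp [hf0]⟩
    · exact ⟨m, g, f, hg, hf, hf0, by rw [inv_div]⟩

lemma F0_subset_Fcoarse (M' : AddSubgroup M) : F0 𝒜 ⊆ Fcoarse 𝒜 M' := by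
  rintro _ ⟨m, f, g, hf, hg, hg0, rfl⟩
  exact ⟨m, f, g, mem_coarsePiece_of_mem_self 𝒜 M' hf, mem_coarsePiece_of_mem_self 𝒜 M' hg,
    hg0, rfl⟩

lemma algebraMap_mem_Fcoarse_closure_singleton [SetLike.GradedMonoid 𝒜] {d : M} {a : S}
    (ha : a ∈ 𝒜 d) : φ a ∈ Fcoarse 𝒜 (AddSubgroup.closure {d}) :=
  ⟨0, a, 1, mem_coarsePiece_of_mem 𝒜 _ (AddSubgroup.mem_closure_singleton_self d)
      (by rwa [zero_add]),
    one_mem_coarsePiece _, one_ne_zero, by simp⟩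

end Subfield

section GeneratedSubfield

variable {𝒜 : M → AddSubgroup S} {K : Subfield (FractionRing S)} (hF0 : F0 𝒜 ⊆ K)
  {d : M} {a : S} (ha : a ∈ 𝒜 d) (ha0 : a ≠ 0) (haK : algebraMap S (FractionRing S) a ∈ K)
include hF0 ha ha0 haK

omit [DecidableEq M] in
lemma div_mem_of_mem_add_zsmul [SetLike.GradedMonoid 𝒜] {m : M} {k l : ℤ} {x g : S}
    (hx : x ∈ 𝒜 (m + k • d)) (hg : g ∈ 𝒜 (m + l • d)) (hg0 : g ≠ 0) : φ x / φ g ∈ K := by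
  obtain ⟨n₁, n₂, hn⟩ : ∃ n₁ n₂ : ℕ, k + n₁ = l + n₂ := ⟨(l - k).toNat, (k - l).toNat, by omega⟩
  have hdeg : m + k • d + n₁ • d = m + l • d + n₂ • d := by
    rw [← natCast_zsmul, ← natCast_zsmul, add_assoc, add_assoc, ← add_zsmul, ← add_zsmul, hn]
  have hxa : x * a ^ n₁ ∈ 𝒜 (m + l • d + n₂ • d) :=
    hdeg ▸ SetLike.mul_mem_graded hx (SetLike.pow_mem_graded n₁ ha)
  have hga : g * a ^ n₂ ∈ 𝒜 (m + l • d + n₂ • d) :=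
    SetLike.mul_mem_graded hg (SetLike.pow_mem_graded n₂ ha)
  have hF : φ (x * a ^ n₁) / φ (g * a ^ n₂) ∈ K :=
    hF0 ⟨_, _, _, hxa, hga, mul_ne_zero hg0 (pow_ne_zero _ ha0), rfl⟩
  have heq : φ x / φ g = φ (x * a ^ n₁) / φ (g * a ^ n₂) * φ a ^ n₂ / φ a ^ n₁ := by
    have := algebraMap_ne_zero ha0
    have := algebraMap_ne_zero hg0
    simp only [map_mul, map_pow]
    field_simp
  rw [heq]
  exact K.div_mem (K.mul_mem hF (K.pow_mem haK n₂)) (K.pow_mem haK n₁)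

lemma div_mem_of_mem_coarsePiece [GradedRing 𝒜] {m : M} {f g : S}
    (hf : f ∈ coarsePiece 𝒜 (AddSubgroup.closure {d}) m)
    (hg : g ∈ coarsePiece 𝒜 (AddSubgroup.closure {d}) m) (hg0 : g ≠ 0) : φ f / φ g ∈ K := by
  have hquot : ∀ {l : ℤ} {g₀ x : S}, g₀ ∈ 𝒜 (m + l • d) → g₀ ≠ 0 →
      x ∈ coarsePiece 𝒜 (AddSubgroup.closure {d}) m → φ x / φ g₀ ∈ K := by
    intro l g₀ x hg₀ hg₀0 hx
    induction hx using coarsePiece_induction with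
    | zero => simp
    | add x y _ _ hx hy => rw [map_add, add_div]; exact K.add_mem hx hy
    | mem m' hm' x hx =>
      obtain ⟨k, rfl⟩ := AddSubgroup.mem_closure_singleton.mp hm'
      exact div_mem_of_mem_add_zsmul hF0 ha ha0 haK hx hg₀ hg₀0
  obtain ⟨m', hm', g₀, hg₀, hg₀0⟩ := exists_ne_zero_mem_of_mem_coarsePiece _ hg hg0
  obtain ⟨l, rfl⟩ := AddSubgroup.mem_closure_singleton.mp hm'
  have heq : φ f / φ g = (φ f / φ g₀) / (φ g / φ g₀) := by
    rw [div_div_div_cancel_right₀ (algebraMap_ne_zero hg₀0)]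
  rw [heq]
  exact K.div_mem (hquot hg₀ hg₀0 hf) (hquot hg₀ hg₀0 hg)

end GeneratedSubfield

theorem stmt0_general (𝒜 : M → AddSubgroup S) [GradedRing 𝒜]
    (d : M) (a : S) (ha : a ∈ 𝒜 d) (ha0 : a ≠ 0) :
    (Subfield.closure (F0 𝒜 ∪ {algebraMap S (FractionRing S) a}) : Set (FractionRing S)) =
      Fcoarse 𝒜 (AddSubgroup.closure {d}) := by
  set K := Subfield.closure (F0 𝒜 ∪ {algebraMap S (FractionRing S) a})
  apply Set.Subset.antisymm
  · change K ≤ coarseSubfield 𝒜 _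
    rw [Subfield.closure_le, Set.union_subset_iff, Set.singleton_subset_iff]
    exact ⟨F0_subset_Fcoarse _, algebraMap_mem_Fcoarse_closure_singleton ha⟩
  · rintro _ ⟨m, f, g, hf, hg, hg0, rfl⟩
    exact div_mem_of_mem_coarsePiece (K := K)
      (Set.subset_union_left.trans Subfield.subset_closure) ha ha0
      (Subfield.subset_closure (Set.mem_union_right _ (Set.mem_singleton _))) hf hg hg0

theorem stmt0 [AddGroup.FG M] (𝒜 : M → AddSubgroup S) [GradedRing 𝒜]
    (d : M) (a : S) (ha : a ∈ 𝒜 d) (ha0 : a ≠ 0) :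
    (Subfield.closure (F0 𝒜 ∪ {algebraMap S (FractionRing S) a}) : Set (FractionRing S)) =
      Fcoarse 𝒜 (AddSubgroup.closure {d}) :=
  stmt0_general 𝒜 d a ha ha0
end

section
/- Let M be a finitely generated abelian group, S an M-graded integral domain with fraction field 𝔽, and A ⊆ S a (possibly infinite) set of homogeneous elements. Then there exists a finite subset A' ⊆ A such that the field generated over 𝔽⁰ by A equals the field generated over 𝔽⁰ by A'. -/
/-!
Dividing a homogeneous element `a` of degree `m` by a quotient `p / q` of nonzero
homogeneous elements with `deg p - deg q = m` lands in `𝔽⁰`. So a subfield `L ⊇ 𝔽⁰` contains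
all of `S^m` as soon as it contains one such quotient, and the degrees `m` for which it does form
a subgroup of `M`. Hence `𝔽⁰(A) = 𝔽⁰(A')` whenever the degrees of the nonzero elements of `A'`
generate the same subgroup as those of `A`, and a finite such `A' ⊆ A` exists because subgroups
of `M` are finitely generated.
-/

variable {M : Type*} [AddCommGroup M] [DecidableEq M]
variable {S : Type*} [CommRing S] [IsDomain S]

theorem AddSubgroup.exists_finite_subset_closure_eq {G : Type*} [AddCommGroup G] [AddGroup.FG G]
    (s : Set G) : ∃ t ⊆ s, t.Finite ∧ closure t = closure s := by
  have : Module.Finite ℤ G := Module.Finite.iff_addGroup_fg.mpr ‹_›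
  have : IsNoetherian ℤ G := isNoetherian_of_isNoetherianRing_of_finite ℤ G
  obtain ⟨t, hts, hspan⟩ := (Submodule.fg_span_iff_fg_span_finset_subset s).mp
    (IsNoetherian.noetherian (Submodule.span ℤ s))
  refine ⟨t, hts, t.finite_toSet, ?_⟩
  rw [← Submodule.span_int_eq_addSubgroupClosure, ← Submodule.span_int_eq_addSubgroupClosure,
    hspan]

namespace GradedFractions

variable {ι R : Type*} [AddCommGroup ι] [CommRing R] [IsDomain R]
variable (𝒜 : ι → AddSubgroup R) [SetLike.GradedMonoid 𝒜]

local notation "φ" => algebraMap R (FractionRing R)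

def fractionDegrees (L : Subfield (FractionRing R)) : AddSubgroup ι where
  carrier := {m | ∃ e p q, p ∈ 𝒜 (m + e) ∧ q ∈ 𝒜 e ∧ p ≠ 0 ∧ q ≠ 0 ∧ φ p / φ q ∈ L}
  zero_mem' := ⟨0, 1, 1, by simpa using SetLike.GradedOne.one_mem, SetLike.GradedOne.one_mem,
    one_ne_zero, one_ne_zero, by simp⟩
  add_mem' := by
    rintro m₁ m₂ ⟨e₁, p₁, q₁, hp₁, hq₁, hp₁0, hq₁0, h₁⟩ ⟨e₂, p₂, q₂, hp₂, hq₂, hp₂0, hq₂0, h₂⟩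
    refine ⟨e₁ + e₂, p₁ * p₂, q₁ * q₂, ?_, SetLike.mul_mem_graded hq₁ hq₂,
      mul_ne_zero hp₁0 hp₂0, mul_ne_zero hq₁0 hq₂0, ?_⟩
    · rw [add_add_add_comm]
      exact SetLike.mul_mem_graded hp₁ hp₂
    · rw [map_mul, map_mul, ← div_mul_div_comm]
      exact mul_mem h₁ h₂
  neg_mem' := by
    rintro m ⟨e, p, q, hp, hq, hp0, hq0, h⟩
    refine ⟨m + e, q, p, by rwa [neg_add_cancel_left], hp, hq0, hp0, ?_⟩
    rw [← inv_div]
    exact inv_mem h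

variable {𝒜}

theorem mem_fractionDegrees_of_algebraMap_mem {L : Subfield (FractionRing R)} {m : ι} {a : R}
    (ha : a ∈ 𝒜 m) (ha0 : a ≠ 0) (hL : φ a ∈ L) : m ∈ fractionDegrees 𝒜 L :=
  ⟨0, a, 1, by rwa [add_zero], SetLike.GradedOne.one_mem, ha0, one_ne_zero,
    by rwa [map_one, div_one]⟩

theorem algebraMap_mem_of_mem_fractionDegrees {L : Subfield (FractionRing R)} (hF0 : F0 𝒜 ⊆ L)
    {m : ι} (hm : m ∈ fractionDegrees 𝒜 L) {a : R} (ha : a ∈ 𝒜 m) : φ a ∈ L := by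
  obtain ⟨e, p, q, hp, hq, hp0, hq0, hpq⟩ := hm
  have hquot : φ (a * q) / φ p ∈ F0 𝒜 :=
    ⟨m + e, a * q, p, SetLike.mul_mem_graded ha hq, hp, hp0, rfl⟩
  have hφp : φ p ≠ 0 := by simpa using hp0
  have hφq : φ q ≠ 0 := by simpa using hq0
  rw [show φ a = φ (a * q) / φ p * (φ p / φ q) by field_simp; rw [map_mul]]
  exact mul_mem (hF0 hquot) hpq

end GradedFractions

open GradedFractions Set in
theorem stmt2 [AddGroup.FG M] (𝒜 : M → AddSubgroup S) [GradedRing 𝒜]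
    (A : Set S) (hA : ∀ a ∈ A, ∃ m, a ∈ 𝒜 m) :
    ∃ A' ⊆ A, A'.Finite ∧
      Subfield.closure (F0 𝒜 ∪ (algebraMap S (FractionRing S)) '' A) =
        Subfield.closure (F0 𝒜 ∪ (algebraMap S (FractionRing S)) '' A') := by
  let B : Set (S × M) := {x | x.1 ∈ A ∧ x.1 ≠ 0 ∧ x.1 ∈ 𝒜 x.2}
  obtain ⟨T, hTB, hT, hclosure⟩ := exists_subset_image_finite_and.mp
    (AddSubgroup.exists_finite_subset_closure_eq (Prod.snd '' B))
  have hTA : Prod.fst '' T ⊆ A := image_subset_iff.mpr fun x hx => (hTB hx).1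
  refine ⟨Prod.fst '' T, hTA, hT.image _, le_antisymm ?_
    (Subfield.closure_mono (union_subset_union_right _ (image_mono hTA)))⟩
  set L := Subfield.closure (F0 𝒜 ∪ algebraMap S (FractionRing S) '' (Prod.fst '' T))
  have hF0 : F0 𝒜 ⊆ L := subset_union_left.trans Subfield.subset_closure
  have hdeg : AddSubgroup.closure (Prod.snd '' B) ≤ fractionDegrees 𝒜 L := by
    rw [← hclosure, AddSubgroup.closure_le]
    rintro _ ⟨x, hx, rfl⟩
    exact mem_fractionDegrees_of_algebraMap_mem (hTB hx).2.2 (hTB hx).2.1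
      (Subfield.subset_closure (Or.inr ⟨x.1, ⟨x, hx, rfl⟩, rfl⟩))
  rw [Subfield.closure_le, union_subset_iff]
  refine ⟨hF0, ?_⟩
  rintro _ ⟨a, ha, rfl⟩
  obtain ⟨m, hm⟩ := hA a ha
  rcases eq_or_ne a 0 with rfl | ha0
  · rw [map_zero]
    exact zero_mem L
  exact algebraMap_mem_of_mem_fractionDegrees hF0
    (hdeg (AddSubgroup.subset_closure ⟨(a, m), ⟨ha, ha0, hm⟩, rfl⟩)) hm
end

section
/- Let Φ : X̄ ⊸ Ȳ be a multi-valued map with associated ring homomorphisms p_Φ* : S[X][g⁻¹] → Γ(Φ) (inclusion) and q_Φ* = Φ* : S[Y] → Γ(Φ), where Γ(Φ) is the subring of closure(S(X)) generated by S[X][g⁻¹] and Φ*(S[Y]). Then p_Φ : Spec Γ(Φ) → Reg Φ is a finite morphism, and consequently for every closed subset W ⊆ Ȳ, the preimage Φ⁻¹(W) := p_Φ(q_Φ⁻¹(W)) is closed in Reg Φ. -/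
/-! Each `zᵢ` is a root of `X^rᵢ - aᵢ` with `aᵢ ∈ A`, hence integral over `A`, so the algebra they
generate is finite over `A`. Integral extensions satisfy going-up, so `p_Φ` is a closed map, and
`Φ⁻¹(W)` is the image under `p_Φ` of the closed set `q_Φ⁻¹(W)`. -/

theorem Algebra.finite_adjoin_range_of_pow_mem_range {R S ι : Type*} [CommRing R] [CommRing S]
    [Algebra R S] [Finite ι] (z : ι → S)
    (hz : ∀ i, ∃ r : ℕ, 0 < r ∧ z i ^ r ∈ (algebraMap R S).range) :
    Module.Finite R (Algebra.adjoin R (Set.range z)) := by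
  have hint : ∀ x ∈ Set.range z, IsIntegral R x := by
    rintro x ⟨i, rfl⟩
    obtain ⟨r, hr, a, ha⟩ := hz i
    exact IsIntegral.of_pow hr (ha ▸ isIntegral_algebraMap)
  exact Module.Finite.iff_fg.mpr (fg_adjoin_of_finite (Set.finite_range z) hint)

theorem PrimeSpectrum.isClosed_image_comap_preimage_of_isIntegral {R S B : Type*} [CommRing R]
    [CommRing S] [CommRing B] {f : R →+* S} (hf : f.IsIntegral) (φ : B →+* S)
    {W : Set (PrimeSpectrum B)} (hW : IsClosed W) :
    IsClosed (comap f '' (comap φ ⁻¹' W)) :=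
  isClosedMap_comap_of_isIntegral f hf _ (hW.preimage (continuous_comap φ))

theorem stmt9_general {A Ω B : Type*} [CommRing A] [Field Ω] [Algebra A Ω]
    {N : ℕ} (z : Fin N → Ω)
    (hz : ∀ i, ∃ r : ℕ, 0 < r ∧ z i ^ r ∈ (algebraMap A Ω).range)
    [CommRing B] (φ : B →+* (Algebra.adjoin A (Set.range z))) :
    Module.Finite A (Algebra.adjoin A (Set.range z)) ∧
    IsClosedMap (PrimeSpectrum.comap (algebraMap A (Algebra.adjoin A (Set.range z)))) ∧
    ∀ W : Set (PrimeSpectrum B), IsClosed W →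
      IsClosed (PrimeSpectrum.comap (algebraMap A (Algebra.adjoin A (Set.range z))) ''
        (PrimeSpectrum.comap φ ⁻¹' W)) := by
  have hfin := Algebra.finite_adjoin_range_of_pow_mem_range z hz
  have hint : (algebraMap A (Algebra.adjoin A (Set.range z))).IsIntegral :=
    algebraMap_isIntegral_iff.mpr inferInstance
  exact ⟨hfin, PrimeSpectrum.isClosedMap_comap_of_isIntegral _ hint,
    fun _ => PrimeSpectrum.isClosed_image_comap_preimage_of_isIntegral hint φ⟩

theorem stmt9 {A Ω B : Type*} [CommRing A] [IsDomain A] [Field Ω] [Algebra A Ω]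
    (hinj : Function.Injective (algebraMap A Ω))
    {N : ℕ} (z : Fin N → Ω)
    (hz : ∀ i, ∃ r : ℕ, 0 < r ∧ z i ^ r ∈ (algebraMap A Ω).range)
    [CommRing B] (φ : B →+* (Algebra.adjoin A (Set.range z))) :
    Module.Finite A (Algebra.adjoin A (Set.range z)) ∧
    IsClosedMap (PrimeSpectrum.comap (algebraMap A (Algebra.adjoin A (Set.range z)))) ∧
    ∀ W : Set (PrimeSpectrum B), IsClosed W →
      IsClosed (PrimeSpectrum.comap (algebraMap A (Algebra.adjoin A (Set.range z))) ''
        (PrimeSpectrum.comap φ ⁻¹' W)) :=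
  stmt9_general z hz φ
end
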